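/- arXiv:2312.09858 — 3 statements merged into one kernel-verified Lean document; each statement's English description precedes it below -/
import Mathlib

section
/- Let A ∈ ℝ^{m×n} and suppose the primal Slater condition holds: there exists x ∈ ℝ^n with Ax = 0 and x > 0 (componentwise). Then the Hoffman constant of the solution mapping P_A satisfies H(P_A) = 1 / inf { ‖Ay‖ : y ∈ ℝ^n, Ay ∉ {Ax : x ≥ 0, ‖x‖ ≤ 1} }. -/
open Matrix Set

noncomputable section

/-- A norm on `Fin n → ℝ`, given as a function with the norm axioms. -/
structure IsNorm {n : ℕ} (ν : (Fin n → ℝ) → ℝ) : Prop where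
  nonneg : ∀ x, 0 ≤ ν x
  eq_zero_iff : ∀ x, ν x = 0 ↔ x = 0
  smul : ∀ (a : ℝ) (x : Fin n → ℝ), ν (a • x) = |a| * ν x
  triangle : ∀ x y, ν (x + y) ≤ ν x + ν y

/-- The dual norm of `ν`, with respect to the standard dot-product pairing. -/
def dualNorm {n : ℕ} (ν : (Fin n → ℝ) → ℝ) (z : Fin n → ℝ) : ℝ :=
  sSup {r | ∃ x, ν x ≤ 1 ∧ r = z ⬝ᵥ x}

/-- Point-to-set distance induced by the norm `ν`. -/
def distWith {n : ℕ} (ν : (Fin n → ℝ) → ℝ) (x : Fin n → ℝ) (S : Set (Fin n → ℝ)) : ℝ :=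
  sInf ((fun s => ν (x - s)) '' S)

/-- The graph of a set-valued mapping. -/
def graphOf {p q : ℕ} (Φ : (Fin p → ℝ) → Set (Fin q → ℝ)) :
    Set ((Fin p → ℝ) × (Fin q → ℝ)) := {z | z.2 ∈ Φ z.1}

/-- The domain of a set-valued mapping. -/
def domOf {p q : ℕ} (Φ : (Fin p → ℝ) → Set (Fin q → ℝ)) : Set (Fin p → ℝ) :=
  {u | (Φ u).Nonempty}

/-- The image of a set-valued mapping. -/
def imOf {p q : ℕ} (Φ : (Fin p → ℝ) → Set (Fin q → ℝ)) : Set (Fin q → ℝ) :=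
  ⋃ u, Φ u

/-- The inverse of a set-valued mapping. -/
def invOf {p q : ℕ} (Φ : (Fin p → ℝ) → Set (Fin q → ℝ)) : (Fin q → ℝ) → Set (Fin p → ℝ) :=
  fun v => {u | v ∈ Φ u}

/-- A polyhedron: an intersection of finitely many closed half-spaces. -/
def IsPolyhedron {E : Type*} [AddCommGroup E] [Module ℝ E] (S : Set E) : Prop :=
  ∃ (k : ℕ) (f : Fin k → E →ₗ[ℝ] ℝ) (c : Fin k → ℝ), S = {x | ∀ i, f i x ≤ c i}

/-- A set-valued mapping is polyhedral if its graph is a polyhedron. -/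
def IsPolyhedralMapping {p q : ℕ} (Φ : (Fin p → ℝ) → Set (Fin q → ℝ)) : Prop :=
  IsPolyhedron (graphOf Φ)

/-- A set-valued mapping is sublinear if its graph is a convex cone containing the origin. -/
def IsSublinearMapping {p q : ℕ} (Φ : (Fin p → ℝ) → Set (Fin q → ℝ)) : Prop :=
  (0 : Fin q → ℝ) ∈ Φ 0 ∧ Convex ℝ (graphOf Φ) ∧
    ∀ (t : ℝ), 0 ≤ t → ∀ z ∈ graphOf Φ, t • z ∈ graphOf Φ

/-- The Hoffman constant of a set-valued mapping, with respect to the norms `νp, νq`. -/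
def hoffmanConst {p q : ℕ} (νp : (Fin p → ℝ) → ℝ) (νq : (Fin q → ℝ) → ℝ)
    (Φ : (Fin p → ℝ) → Set (Fin q → ℝ)) : ℝ :=
  sSup {r | ∃ u v, u ∈ domOf Φ ∧ v ∈ imOf Φ ∧ v ∉ Φ u ∧
    r = distWith νq v (Φ u) / distWith νp u (invOf Φ v)}

/-- The norm of a sublinear set-valued mapping, with respect to the norms `νp, νq`. -/
def svmNorm {p q : ℕ} (νp : (Fin p → ℝ) → ℝ) (νq : (Fin q → ℝ) → ℝ)
    (Φ : (Fin p → ℝ) → Set (Fin q → ℝ)) : ℝ :=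
  sSup {r | ∃ u, u ∈ domOf Φ ∧ νp u ≤ 1 ∧ r = sInf (νq '' Φ u)}

/-- The tangent cone to a set `G` at a point `g ∈ G`. -/
def polyTangentCone {E : Type*} [AddCommGroup E] [Module ℝ E] (G : Set E) (g : E) : Set E :=
  {d | ∃ t : ℝ, 0 < t ∧ g + t • d ∈ G}

/-- The collection of tangent cones to the graph of `Φ`. -/
def tangentCones {p q : ℕ} (Φ : (Fin p → ℝ) → Set (Fin q → ℝ)) :
    Set (Set ((Fin p → ℝ) × (Fin q → ℝ))) :=
  {T | ∃ u v, v ∈ Φ u ∧ T = polyTangentCone (graphOf Φ) (u, v)}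

/-- The set-valued mapping whose graph is `T`. -/
def mapOfGraph {p q : ℕ} (T : Set ((Fin p → ℝ) × (Fin q → ℝ))) :
    (Fin p → ℝ) → Set (Fin q → ℝ) := fun w => {z | (w, z) ∈ T}

/-- A subset is a linear subspace if it is the underlying set of a submodule. -/
def IsLinearSubspace {E : Type*} [AddCommGroup E] [Module ℝ E] (S : Set E) : Prop :=
  ∃ W : Submodule ℝ E, S = ↑W

/-- The upper adjoint of a sublinear mapping. -/
def upperAdjoint {p q : ℕ} (Φ : (Fin p → ℝ) → Set (Fin q → ℝ)) :
    (Fin q → ℝ) → Set (Fin p → ℝ) :=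
  fun w => {z | ∀ u v, v ∈ Φ u → z ⬝ᵥ u ≤ w ⬝ᵥ v}

/-- The solution mapping `b ↦ {x ∈ R : Ax - b ∈ S}`. -/
def solMap {m n : ℕ} (A : Matrix (Fin m) (Fin n) ℝ) (R : Set (Fin n → ℝ))
    (S : Set (Fin m → ℝ)) : (Fin m → ℝ) → Set (Fin n → ℝ) :=
  fun b => {x | x ∈ R ∧ A *ᵥ x - b ∈ S}

/-- The dual cone `{z : ⟨z,x⟩ ≥ 0 for all x ∈ C}`. -/
def dualConeOf {n : ℕ} (C : Set (Fin n → ℝ)) : Set (Fin n → ℝ) :=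
  {z | ∀ x ∈ C, 0 ≤ z ⬝ᵥ x}

/-- A polyhedral cone. -/
def IsPolyhedralCone {n : ℕ} (C : Set (Fin n → ℝ)) : Prop :=
  IsPolyhedron C ∧ (0 : Fin n → ℝ) ∈ C ∧ ∀ (t : ℝ), 0 ≤ t → ∀ x ∈ C, t • x ∈ C

/-- The dual solution mapping `c ↦ {y ∈ S* : c - Aᵀy ∈ R*}`. -/
def dualSolMap {m n : ℕ} (A : Matrix (Fin m) (Fin n) ℝ) (R : Set (Fin n → ℝ))
    (S : Set (Fin m → ℝ)) : (Fin n → ℝ) → Set (Fin m → ℝ) :=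
  fun c => {y | y ∈ dualConeOf S ∧ c - Aᵀ *ᵥ y ∈ dualConeOf R}

/-- The box `{x : ℓ ≤ x ≤ u}`. -/
def boxSet {n : ℕ} (ℓ u : Fin n → ℝ) : Set (Fin n → ℝ) :=
  {x | ∀ i, ℓ i ≤ x i ∧ x i ≤ u i}

/-- The nonnegative orthant of `ℝ^n`. -/
def nonnegOrthant (n : ℕ) : Set (Fin n → ℝ) := {x | ∀ i, 0 ≤ x i}

/-- The Euclidean norm on `Fin n → ℝ`. -/
def euclNorm {n : ℕ} (x : Fin n → ℝ) : ℝ := Real.sqrt (∑ i, x i ^ 2)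

/-- The operator norm induced by the Euclidean norms. -/
def opNorm2 {m n : ℕ} (M : Matrix (Fin m) (Fin n) ℝ) : ℝ :=
  sSup {r | ∃ x, euclNorm x ≤ 1 ∧ r = euclNorm (M *ᵥ x)}

/-- The chi condition measure `χ(A) = sup_{D} ‖(ADAᵀ)⁻¹AD‖₂`. -/
def chiMeasure {m n : ℕ} (A : Matrix (Fin m) (Fin n) ℝ) : ℝ :=
  sSup {r | ∃ d : Fin n → ℝ, (∀ i, 0 < d i) ∧
    r = opNorm2 ((A * Matrix.diagonal d * Aᵀ)⁻¹ * (A * Matrix.diagonal d))}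

/-- The chi-bar condition measure `χ̄(A) = sup_{D} ‖Aᵀ(ADAᵀ)⁻¹AD‖₂`. -/
def chiBarMeasure {m n : ℕ} (A : Matrix (Fin m) (Fin n) ℝ) : ℝ :=
  sSup {r | ∃ d : Fin n → ℝ, (∀ i, 0 < d i) ∧
    r = opNorm2 (Aᵀ * (A * Matrix.diagonal d * Aᵀ)⁻¹ * (A * Matrix.diagonal d))}

/-- The orthogonal complement (w.r.t. the dot product) of a set. -/
def perpOf {m : ℕ} (L : Set (Fin m → ℝ)) : Set (Fin m → ℝ) :=
  {y | ∀ s ∈ L, y ⬝ᵥ s = 0}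

/-- The mapping `P_A : b ↦ {x ≥ 0 : Ax = b}`. -/
def PA {m n : ℕ} (A : Matrix (Fin m) (Fin n) ℝ) : (Fin m → ℝ) → Set (Fin n → ℝ) :=
  fun b => {x | (∀ i, 0 ≤ x i) ∧ A *ᵥ x = b}

/-- The mapping `P_A* : c ↦ {y : Aᵀy ≤ c}`. -/
def PAstar {m n : ℕ} (A : Matrix (Fin m) (Fin n) ℝ) : (Fin n → ℝ) → Set (Fin m → ℝ) :=
  fun c => {y | ∀ i, (Aᵀ *ᵥ y) i ≤ c i}

/-- Signature vectors: entries equal to `1` or `-1`. -/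
def IsSignVector {n : ℕ} (d : Fin n → ℝ) : Prop := ∀ i, d i = 1 ∨ d i = -1

end

/-!
Write `S = A {x ≥ 0 : ‖x‖ ≤ 1}` and `δ` for the infimum of `‖Ay‖` over `Ay ∉ S`. Since
`P_A⁻¹(v) = {Av}` for `v ≥ 0`, the Hoffman ratios are `dist(v, P_A(u)) / ‖u - Av‖`. By homogeneity
every `w` in the range of `A` with `‖w‖ < δ` lies in `S`, whence `dist(0, P_A(w)) ≤ ‖w‖ / δ`;
translating by `v` bounds every ratio by `1 / δ`. Conversely, if `Ay ∉ S` then every point of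
`P_A(Ay)` has norm `> 1`, so the ratio at `(u, v) = (Ay, 0)` is at least `1 / ‖Ay‖`.

The Slater point lets every `Ay` be written as `Ax` with `x ≥ 0` and `‖x‖ = O(‖Ay‖)`, which gives
`δ > 0`. If no `Ay` leaves the bounded set `S`, then `A = 0` and both sides vanish, by the
conventions `sSup ∅ = 0` and `1 / 0 = 0`.
-/

namespace Seminorm

variable {E : Type*} [NormedAddCommGroup E] [NormedSpace ℝ E] [FiniteDimensional ℝ E]

theorem continuous_of_finiteDimensional (p : Seminorm ℝ E) : Continuous p :=
  continuousOn_univ.1 (p.convexOn.continuousOn isOpen_univ)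

theorem exists_le_mul_norm (p : Seminorm ℝ E) : ∃ C, 0 < C ∧ ∀ x, p x ≤ C * ‖x‖ :=
  p.bound_of_continuous_normedSpace p.continuous_of_finiteDimensional

theorem exists_mul_norm_le (p : Seminorm ℝ E) (hp : ∀ x, p x = 0 → x = 0) :
    ∃ c, 0 < c ∧ ∀ x, c * ‖x‖ ≤ p x := by
  rcases subsingleton_or_nontrivial E with hE | hE
  · exact ⟨1, one_pos, fun x => by simp [Subsingleton.elim x 0]⟩
  obtain ⟨x₀, hx₀, hmin⟩ := (isCompact_sphere (0 : E) 1).exists_isMinOn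
    (NormedSpace.sphere_nonempty.2 zero_le_one) p.continuous_of_finiteDimensional.continuousOn
  have hx₀0 : x₀ ≠ 0 := ne_zero_of_mem_unit_sphere ⟨x₀, hx₀⟩
  refine ⟨p x₀, (apply_nonneg p x₀).lt_of_ne' (mt (hp x₀) hx₀0), fun x => ?_⟩
  rcases eq_or_ne x 0 with rfl | hx
  · simp
  have hx' : 0 < ‖x‖ := norm_pos_iff.2 hx
  have hunit : ‖x‖⁻¹ • x ∈ Metric.sphere (0 : E) 1 := by
    simp [norm_smul, hx'.ne']
  calc p x₀ * ‖x‖ ≤ p (‖x‖⁻¹ • x) * ‖x‖ := by gcongr; exact hmin hunit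
    _ = p x := by rw [map_smul_eq_mul, norm_inv, norm_norm]; field_simp

end Seminorm

namespace IsNorm

variable {k : ℕ} {ν : (Fin k → ℝ) → ℝ}

def toSeminorm (h : IsNorm ν) : Seminorm ℝ (Fin k → ℝ) := Seminorm.of ν h.triangle h.smul

theorem map_zero (h : IsNorm ν) : ν 0 = 0 := (h.eq_zero_iff 0).2 rfl

theorem map_neg (h : IsNorm ν) (x : Fin k → ℝ) : ν (-x) = ν x := by
  simpa using h.smul (-1) x

theorem pos (h : IsNorm ν) {x : Fin k → ℝ} (hx : x ≠ 0) : 0 < ν x :=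
  (h.nonneg x).lt_of_ne' (mt (h.eq_zero_iff x).1 hx)

theorem exists_le_mul_norm (h : IsNorm ν) : ∃ C, 0 < C ∧ ∀ x, ν x ≤ C * ‖x‖ :=
  h.toSeminorm.exists_le_mul_norm

theorem exists_mul_norm_le (h : IsNorm ν) : ∃ c, 0 < c ∧ ∀ x, c * ‖x‖ ≤ ν x :=
  h.toSeminorm.exists_mul_norm_le fun x => (h.eq_zero_iff x).1

end IsNorm

theorem LinearMap.exists_preimage_norm_le_of_finiteDimensional {E F : Type*}
    [NormedAddCommGroup E] [NormedSpace ℝ E] [FiniteDimensional ℝ E]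
    [NormedAddCommGroup F] [NormedSpace ℝ F] (f : E →ₗ[ℝ] F) :
    ∃ C > 0, ∀ x, ∃ x', f x' = f x ∧ ‖x'‖ ≤ C * ‖f x‖ := by
  obtain ⟨C, hC, hpre⟩ :=
    (LinearMap.toContinuousLinearMap f.rangeRestrict).exists_preimage_norm_le
      f.surjective_rangeRestrict
  refine ⟨C, hC, fun x => ?_⟩
  obtain ⟨x', hx', hnorm⟩ := hpre (f.rangeRestrict x)
  exact ⟨x', congrArg Subtype.val hx', hnorm⟩

section Distance

variable {k : ℕ} {ν : (Fin k → ℝ) → ℝ} {x a s : Fin k → ℝ} {S : Set (Fin k → ℝ)}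

theorem distWith_le (hν : ∀ x, 0 ≤ ν x) (hs : s ∈ S) : distWith ν x S ≤ ν (x - s) :=
  csInf_le ⟨0, by rintro _ ⟨t, -, rfl⟩; exact hν _⟩ ⟨s, hs, rfl⟩

theorem le_distWith {c : ℝ} (hS : S.Nonempty) (h : ∀ s ∈ S, c ≤ ν (x - s)) :
    c ≤ distWith ν x S :=
  le_csInf (hS.image _) (by rintro _ ⟨s, hs, rfl⟩; exact h s hs)

theorem distWith_singleton : distWith ν x {a} = ν (x - a) := by
  simp [distWith]

end Distance

def hoffmanRatios {p q : ℕ} (νp : (Fin p → ℝ) → ℝ) (νq : (Fin q → ℝ) → ℝ)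
    (Φ : (Fin p → ℝ) → Set (Fin q → ℝ)) : Set ℝ :=
  {r | ∃ u v, u ∈ domOf Φ ∧ v ∈ imOf Φ ∧ v ∉ Φ u ∧
    r = distWith νq v (Φ u) / distWith νp u (invOf Φ v)}

section SolutionMap

variable {m n : ℕ} {A : Matrix (Fin m) (Fin n) ℝ}

theorem exists_one_le_of_slater (hSlater : ∃ x : Fin n → ℝ, A *ᵥ x = 0 ∧ ∀ i, 0 < x i) :
    ∃ e : Fin n → ℝ, A *ᵥ e = 0 ∧ ∀ i, 1 ≤ e i := by
  obtain ⟨x, hAx, hx⟩ := hSlater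
  refine ⟨(∑ j, (x j)⁻¹) • x, by rw [mulVec_smul, hAx, smul_zero], fun i => ?_⟩
  calc (1 : ℝ) = (x i)⁻¹ * x i := (inv_mul_cancel₀ (hx i).ne').symm
    _ ≤ (∑ j, (x j)⁻¹) * x i := by
      gcongr
      · exact (hx i).le
      · exact Finset.single_le_sum (fun j _ => (inv_pos.2 (hx j)).le) (Finset.mem_univ i)

theorem exists_nonneg_preimage_norm_le
    (hSlater : ∃ x : Fin n → ℝ, A *ᵥ x = 0 ∧ ∀ i, 0 < x i) :
    ∃ K > 0, ∀ y, ∃ x : Fin n → ℝ, (∀ i, 0 ≤ x i) ∧ A *ᵥ x = A *ᵥ y ∧ ‖x‖ ≤ K * ‖A *ᵥ y‖ := by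
  obtain ⟨e, hAe, he⟩ := exists_one_le_of_slater hSlater
  obtain ⟨C, hC, hpre⟩ := A.mulVecLin.exists_preimage_norm_le_of_finiteDimensional
  refine ⟨C * (1 + ‖e‖), by positivity, fun y => ?_⟩
  obtain ⟨z, hAz, hz⟩ := hpre y
  refine ⟨z + ‖z‖ • e, fun i => ?_, ?_, ?_⟩
  · have hzi : -z i ≤ ‖z‖ := (neg_le_abs _).trans (norm_le_pi_norm z i)
    have : ‖z‖ ≤ ‖z‖ * e i := le_mul_of_one_le_right (norm_nonneg z) (he i)
    simp only [Pi.add_apply, Pi.smul_apply, smul_eq_mul]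
    linarith
  · simpa [mulVec_add, mulVec_smul, hAe] using hAz
  · calc ‖z + ‖z‖ • e‖ ≤ ‖z‖ * (1 + ‖e‖) := by
          simpa [norm_smul, mul_add] using norm_add_le z (‖z‖ • e)
      _ ≤ C * ‖A *ᵥ y‖ * (1 + ‖e‖) := by gcongr; exact hz
      _ = C * (1 + ‖e‖) * ‖A *ᵥ y‖ := by ring

variable {νn : (Fin n → ℝ) → ℝ} {νm : (Fin m → ℝ) → ℝ}

theorem exists_nonneg_preimage_le (hνn : IsNorm νn) (hνm : IsNorm νm)
    (hSlater : ∃ x : Fin n → ℝ, A *ᵥ x = 0 ∧ ∀ i, 0 < x i) :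
    ∃ C > 0, ∀ y, ∃ x : Fin n → ℝ, (∀ i, 0 ≤ x i) ∧ A *ᵥ x = A *ᵥ y ∧
      νn x ≤ C * νm (A *ᵥ y) := by
  obtain ⟨K, hK, hpre⟩ := exists_nonneg_preimage_norm_le hSlater
  obtain ⟨Cn, hCn, hνn_le⟩ := hνn.exists_le_mul_norm
  obtain ⟨cm, hcm, hνm_ge⟩ := hνm.exists_mul_norm_le
  refine ⟨Cn * K / cm, by positivity, fun y => ?_⟩
  obtain ⟨x, hx, hAx, hnorm⟩ := hpre y
  refine ⟨x, hx, hAx, ?_⟩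
  calc νn x ≤ Cn * (K * ‖A *ᵥ y‖) := (hνn_le x).trans (by gcongr)
    _ = Cn * K / cm * (cm * ‖A *ᵥ y‖) := by field_simp
    _ ≤ Cn * K / cm * νm (A *ᵥ y) := by gcongr; exact hνm_ge _

theorem exists_mulVec_le (hνn : IsNorm νn) (hνm : IsNorm νm) :
    ∃ K > 0, ∀ x, νm (A *ᵥ x) ≤ K * νn x := by
  obtain ⟨C, hC, hle⟩ := (hνm.toSeminorm.comp A.mulVecLin).exists_le_mul_norm
  obtain ⟨c, hc, hge⟩ := hνn.exists_mul_norm_le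
  refine ⟨C / c, by positivity, fun x => ?_⟩
  calc νm (A *ᵥ x) ≤ C * ‖x‖ := hle x
    _ = C / c * (c * ‖x‖) := by field_simp
    _ ≤ C / c * νn x := by gcongr; exact hge x

theorem mem_imOf_PA {v : Fin n → ℝ} : v ∈ imOf (PA A) ↔ ∀ i, 0 ≤ v i :=
  ⟨fun hv => (mem_iUnion.1 hv).choose_spec.1, fun hv => mem_iUnion.2 ⟨_, hv, rfl⟩⟩

theorem invOf_PA {v : Fin n → ℝ} (hv : ∀ i, 0 ≤ v i) : invOf (PA A) v = {A *ᵥ v} := by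
  ext b
  exact ⟨fun h => h.2.symm, fun h => ⟨hv, (eq_of_mem_singleton h).symm⟩⟩

theorem distWith_PA_le_distWith_zero (hνn : IsNorm νn) {u : Fin m → ℝ} {v : Fin n → ℝ}
    (hv : ∀ i, 0 ≤ v i) (hne : (PA A (u - A *ᵥ v)).Nonempty) :
    distWith νn v (PA A u) ≤ distWith νn 0 (PA A (u - A *ᵥ v)) := by
  refine le_distWith hne fun z ⟨hz, hAz⟩ => ?_
  have hvz : v + z ∈ PA A u :=
    ⟨fun i => add_nonneg (hv i) (hz i), by rw [mulVec_add, hAz, add_sub_cancel]⟩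
  simpa using distWith_le (x := v) hνn.nonneg hvz

def nonnegBallImage (A : Matrix (Fin m) (Fin n) ℝ) (νn : (Fin n → ℝ) → ℝ) : Set (Fin m → ℝ) :=
  {w | ∃ x : Fin n → ℝ, (∀ i, 0 ≤ x i) ∧ νn x ≤ 1 ∧ w = A *ᵥ x}

def outerRangeNorms (A : Matrix (Fin m) (Fin n) ℝ) (νn : (Fin n → ℝ) → ℝ)
    (νm : (Fin m → ℝ) → ℝ) : Set ℝ :=
  {r | ∃ y : Fin n → ℝ, A *ᵥ y ∉ nonnegBallImage A νn ∧ r = νm (A *ᵥ y)}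

theorem zero_mem_nonnegBallImage (hνn : IsNorm νn) : 0 ∈ nonnegBallImage A νn :=
  ⟨0, fun _ => le_rfl, by rw [hνn.map_zero]; exact zero_le_one, (mulVec_zero A).symm⟩

theorem mem_nonnegBallImage_of_lt_sInf (hνm : IsNorm νm) {y : Fin n → ℝ}
    (hy : νm (A *ᵥ y) < sInf (outerRangeNorms A νn νm)) : A *ᵥ y ∈ nonnegBallImage A νn := by
  by_contra hout
  refine hy.not_ge (csInf_le ⟨0, ?_⟩ ⟨y, hout, rfl⟩)
  rintro _ ⟨_, -, rfl⟩
  exact hνm.nonneg _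

theorem one_le_distWith_zero_PA (hνn : IsNorm νn) {y : Fin n → ℝ}
    (hy : A *ᵥ y ∉ nonnegBallImage A νn)
    (hne : (PA A (A *ᵥ y)).Nonempty) : 1 ≤ distWith νn 0 (PA A (A *ᵥ y)) := by
  refine le_distWith hne fun z ⟨hz, hAz⟩ => ?_
  rw [zero_sub, hνn.map_neg]
  by_contra! hlt
  exact hy ⟨z, hz, hlt.le, hAz.symm⟩

theorem PA_mulVec_nonempty (hSlater : ∃ x : Fin n → ℝ, A *ᵥ x = 0 ∧ ∀ i, 0 < x i)
    (y : Fin n → ℝ) : (PA A (A *ᵥ y)).Nonempty := by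
  obtain ⟨K, -, hpre⟩ := exists_nonneg_preimage_norm_le hSlater
  obtain ⟨x, hx, hAx, -⟩ := hpre y
  exact ⟨x, hx, hAx⟩

theorem sInf_outerRangeNorms_pos (hνn : IsNorm νn) (hνm : IsNorm νm)
    (hSlater : ∃ x : Fin n → ℝ, A *ᵥ x = 0 ∧ ∀ i, 0 < x i)
    (hT : (outerRangeNorms A νn νm).Nonempty) : 0 < sInf (outerRangeNorms A νn νm) := by
  obtain ⟨C, hC, hpre⟩ := exists_nonneg_preimage_le hνn hνm hSlater
  refine (one_div_pos.2 hC).trans_le (le_csInf hT ?_)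
  rintro _ ⟨y, hy, rfl⟩
  by_contra! hlt
  obtain ⟨x, hx, hAx, hνx⟩ := hpre y
  have : νn x < 1 := by
    calc νn x ≤ C * νm (A *ᵥ y) := hνx
      _ < C * (1 / C) := by gcongr
      _ = 1 := mul_one_div_cancel hC.ne'
  exact hy ⟨x, hx, this.le, hAx.symm⟩

theorem distWith_zero_PA_mul_sInf_le (hνn : IsNorm νn) (hνm : IsNorm νm)
    (hδ : 0 < sInf (outerRangeNorms A νn νm)) (y : Fin n → ℝ) :
    distWith νn 0 (PA A (A *ᵥ y)) * sInf (outerRangeNorms A νn νm) ≤ νm (A *ᵥ y) := by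
  set δ := sInf (outerRangeNorms A νn νm)
  set D := distWith νn 0 (PA A (A *ᵥ y))
  rcases eq_or_ne (A *ᵥ y) 0 with hAy | hAy
  · have hD : D ≤ 0 := by
      simpa [hνn.map_zero] using distWith_le (x := 0) hνn.nonneg
        (show (0 : Fin n → ℝ) ∈ PA A (A *ᵥ y) from ⟨fun _ => le_rfl, by rw [hAy, mulVec_zero]⟩)
    rw [hAy, hνm.map_zero]
    exact mul_nonpos_of_nonpos_of_nonneg hD hδ.le
  have hscaled : ∀ d ∈ Ioo 0 δ, D * d ≤ νm (A *ᵥ y) := by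
    rintro d ⟨hd, hdδ⟩
    have hAy' := hνm.pos hAy
    set s := d / νm (A *ᵥ y)
    have hs : 0 < s := by positivity
    have hsd : s * νm (A *ᵥ y) = d := div_mul_cancel₀ d hAy'.ne'
    have hνs : νm (A *ᵥ (s • y)) = d := by
      rw [mulVec_smul, hνm.smul, abs_of_pos hs, hsd]
    obtain ⟨x, hx, hνx, hAx⟩ := mem_nonnegBallImage_of_lt_sInf hνm (hνs.trans_lt hdδ)
    have hmem : s⁻¹ • x ∈ PA A (A *ᵥ y) :=
      ⟨fun i => mul_nonneg (inv_nonneg.2 hs.le) (hx i),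
        by rw [mulVec_smul, ← hAx, mulVec_smul, inv_smul_smul₀ hs.ne']⟩
    calc D * d ≤ νn (0 - s⁻¹ • x) * d :=
          mul_le_mul_of_nonneg_right (distWith_le hνn.nonneg hmem) hd.le
      _ = s⁻¹ * νn x * d := by rw [zero_sub, hνn.map_neg, hνn.smul, abs_of_pos (inv_pos.2 hs)]
      _ ≤ s⁻¹ * 1 * d := by gcongr
      _ = νm (A *ᵥ y) := by rw [← hsd]; field_simp
  -- let `d` increase to `δ`
  exact le_of_tendsto (((continuous_const.mul continuous_id).tendsto δ).mono_left
    nhdsWithin_le_nhds) (Filter.eventually_of_mem (Ioo_mem_nhdsLT hδ) hscaled)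

theorem le_one_div_of_mem_hoffmanRatios_PA (hνn : IsNorm νn) (hνm : IsNorm νm)
    (hSlater : ∃ x : Fin n → ℝ, A *ᵥ x = 0 ∧ ∀ i, 0 < x i)
    (hδ : 0 < sInf (outerRangeNorms A νn νm)) :
    ∀ r ∈ hoffmanRatios νm νn (PA A), r ≤ 1 / sInf (outerRangeNorms A νn νm) := by
  rintro _ ⟨_, v, ⟨x₀, -, rfl⟩, hv, hvu, rfl⟩
  rw [mem_imOf_PA] at hv
  have hsub : A *ᵥ x₀ - A *ᵥ v = A *ᵥ (x₀ - v) := (mulVec_sub A x₀ v).symm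
  have hne : A *ᵥ (x₀ - v) ≠ 0 := by
    rw [← hsub, sub_ne_zero]
    exact fun h => hvu ⟨hv, h.symm⟩
  rw [invOf_PA hv, distWith_singleton, hsub, div_le_div_iff₀ (hνm.pos hne) hδ, one_mul]
  calc distWith νn v (PA A (A *ᵥ x₀)) * sInf (outerRangeNorms A νn νm)
      ≤ distWith νn 0 (PA A (A *ᵥ (x₀ - v))) * sInf (outerRangeNorms A νn νm) := by
        rw [← hsub]
        gcongr
        exact distWith_PA_le_distWith_zero hνn hv (hsub ▸ PA_mulVec_nonempty hSlater _)
    _ ≤ νm (A *ᵥ (x₀ - v)) := distWith_zero_PA_mul_sInf_le hνn hνm hδ _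

theorem exists_mem_hoffmanRatios_PA_ge (hνn : IsNorm νn) (hνm : IsNorm νm)
    (hSlater : ∃ x : Fin n → ℝ, A *ᵥ x = 0 ∧ ∀ i, 0 < x i) {y : Fin n → ℝ}
    (hy : A *ᵥ y ∉ nonnegBallImage A νn) :
    ∃ r ∈ hoffmanRatios νm νn (PA A), 1 / νm (A *ᵥ y) ≤ r := by
  have hne := PA_mulVec_nonempty hSlater y
  have hAy : A *ᵥ y ≠ 0 := fun h => hy (h ▸ zero_mem_nonnegBallImage hνn)
  refine ⟨_, ⟨A *ᵥ y, 0, hne, mem_imOf_PA.2 fun _ => le_rfl,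
    fun h => hAy (by rw [← h.2, mulVec_zero]), rfl⟩, ?_⟩
  rw [invOf_PA (v := 0) fun _ => le_rfl, distWith_singleton, mulVec_zero, sub_zero]
  exact div_le_div_of_nonneg_right (one_le_distWith_zero_PA hνn hy hne) (hνm.nonneg _)

theorem isLUB_hoffmanRatios_PA (hνn : IsNorm νn) (hνm : IsNorm νm)
    (hSlater : ∃ x : Fin n → ℝ, A *ᵥ x = 0 ∧ ∀ i, 0 < x i)
    (hT : (outerRangeNorms A νn νm).Nonempty) :
    IsLUB (hoffmanRatios νm νn (PA A)) (1 / sInf (outerRangeNorms A νn νm)) := by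
  have hδ := sInf_outerRangeNorms_pos hνn hνm hSlater hT
  refine ⟨le_one_div_of_mem_hoffmanRatios_PA hνn hνm hSlater hδ, fun b hb => ?_⟩
  have hle : ∀ y, A *ᵥ y ∉ nonnegBallImage A νn → 1 / νm (A *ᵥ y) ≤ b := fun y hy =>
    let ⟨r, hr, hle⟩ := exists_mem_hoffmanRatios_PA_ge hνn hνm hSlater hy
    hle.trans (hb hr)
  have hpos : ∀ y, A *ᵥ y ∉ nonnegBallImage A νn → 0 < νm (A *ᵥ y) := fun y hy =>
    hδ.trans_le (csInf_le ⟨0, fun _ ⟨_, _, h⟩ => h ▸ hνm.nonneg _⟩ ⟨y, hy, rfl⟩)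
  obtain ⟨_, y₀, hy₀, rfl⟩ := hT
  have hb0 : 0 < b := (one_div_pos.2 (hpos y₀ hy₀)).trans_le (hle y₀ hy₀)
  rw [one_div_le hδ hb0]
  refine le_csInf ⟨_, y₀, hy₀, rfl⟩ ?_
  rintro _ ⟨y, hy, rfl⟩
  exact (one_div_le (hpos y hy) hb0).1 (hle y hy)

theorem mulVec_eq_zero_of_outerRangeNorms_eq_empty (hνn : IsNorm νn) (hνm : IsNorm νm)
    (hT : outerRangeNorms A νn νm = ∅) (y : Fin n → ℝ) : A *ᵥ y = 0 := by
  obtain ⟨K, hK, hle⟩ := exists_mulVec_le (A := A) hνn hνm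
  by_contra hAy
  set t := (K + 1) / νm (A *ᵥ y)
  have ht : 0 < t := by have := hνm.pos hAy; positivity
  have hνt : νm (A *ᵥ (t • y)) = K + 1 := by
    rw [mulVec_smul, hνm.smul, abs_of_pos ht]
    exact div_mul_cancel₀ _ (hνm.pos hAy).ne'
  have hin : A *ᵥ (t • y) ∈ nonnegBallImage A νn := by
    by_contra hout
    exact (eq_empty_iff_forall_notMem.1 hT) _ ⟨t • y, hout, rfl⟩
  obtain ⟨x, -, hνx, hAx⟩ := hin
  have : K + 1 ≤ K := by
    calc K + 1 = νm (A *ᵥ x) := by rw [← hAx, hνt]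
      _ ≤ K * νn x := hle x
      _ ≤ K * 1 := by gcongr
      _ = K := mul_one K
  linarith

theorem hoffmanRatios_PA_eq_empty (hA : ∀ y : Fin n → ℝ, A *ᵥ y = 0) :
    hoffmanRatios νm νn (PA A) = ∅ := by
  refine eq_empty_iff_forall_notMem.2 ?_
  rintro _ ⟨_, v, ⟨x₀, -, rfl⟩, hv, hvu, -⟩
  exact hvu ⟨mem_imOf_PA.1 hv, by rw [hA, hA]⟩

end SolutionMap

/-- under the primal Slater condition `Ax = 0, x > 0`,
`H(P_A) = 1 / inf { ‖Ay‖ : Ay ∉ {Ax : x ≥ 0, ‖x‖ ≤ 1} }`. -/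
theorem stmt13 {m n : ℕ} (A : Matrix (Fin m) (Fin n) ℝ)
    (νn : (Fin n → ℝ) → ℝ) (νm : (Fin m → ℝ) → ℝ) (hνn : IsNorm νn) (hνm : IsNorm νm)
    (hSlater : ∃ x : Fin n → ℝ, A *ᵥ x = 0 ∧ ∀ i, 0 < x i) :
    hoffmanConst νm νn (PA A) =
      1 / sInf {r | ∃ y : Fin n → ℝ,
        A *ᵥ y ∉ {w | ∃ x : Fin n → ℝ, (∀ i, 0 ≤ x i) ∧ νn x ≤ 1 ∧ w = A *ᵥ x} ∧
        r = νm (A *ᵥ y)} := by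
  change sSup (hoffmanRatios νm νn (PA A)) = 1 / sInf (outerRangeNorms A νn νm)
  rcases (outerRangeNorms A νn νm).eq_empty_or_nonempty with hT | hT
  · rw [hoffmanRatios_PA_eq_empty (mulVec_eq_zero_of_outerRangeNorms_eq_empty hνn hνm hT), hT,
      Real.sSup_empty, Real.sInf_empty, div_zero]
  · have ⟨_, y, hy, _⟩ := hT
    obtain ⟨r, hr, -⟩ := exists_mem_hoffmanRatios_PA_ge hνn hνm hSlater hy
    exact (isLUB_hoffmanRatios_PA hνn hνm hSlater hT).csSup_eq ⟨r, hr⟩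
end

section
/- Let A ∈ ℝ^{m×n} and I ⊆ {1,…,n}. The set {Ax : x ∈ ℝ^n, x_i ≥ 0 for all i ∈ I} is a linear subspace of ℝ^m if and only if the Slater condition holds: there exists x ∈ ℝ^n with Ax = 0 and x_i > 0 for all i ∈ I. -/
open Matrix Set

open Filter

variable {ι F : Type*} [AddCommGroup F] [Module ℝ F]

def partialOrthant (I : Set ι) : Set (ι → ℝ) := {x | ∀ i ∈ I, 0 ≤ x i}

theorem exists_add_smul_mem_partialOrthant [Finite ι] {I : Set ι} {x₀ : ι → ℝ}
    (hpos : ∀ i ∈ I, 0 < x₀ i) (x : ι → ℝ) : ∃ t : ℝ, x + t • x₀ ∈ partialOrthant I := by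
  have : ∀ᶠ t in atTop, ∀ i ∈ I, 0 ≤ x i + t * x₀ i := by
    refine eventually_all.2 fun i => ?_
    by_cases hi : i ∈ I
    · have hlim : Tendsto (fun t => x i + t * x₀ i) atTop atTop :=
        tendsto_atTop_add_const_left _ _ (tendsto_id.atTop_mul_const (hpos i hi))
      exact (hlim.eventually_ge_atTop 0).mono fun _ ht _ => ht
    · exact Eventually.of_forall fun _ hi' => absurd hi' hi
  simpa [partialOrthant] using this.exists

theorem image_partialOrthant_eq_range [Finite ι] {I : Set ι} {f : (ι → ℝ) →ₗ[ℝ] F}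
    {x₀ : ι → ℝ} (hker : f x₀ = 0) (hpos : ∀ i ∈ I, 0 < x₀ i) :
    f '' partialOrthant I = range f := by
  refine (image_subset_range _ _).antisymm ?_
  rintro _ ⟨x, rfl⟩
  obtain ⟨t, ht⟩ := exists_add_smul_mem_partialOrthant hpos x
  exact ⟨x + t • x₀, ht, by simp [hker]⟩

/-- Writing `-f 1` as `f y` with `y` in the orthant, `1 + y` is a Slater point. -/
theorem exists_slater_of_isLinearSubspace_image {I : Set ι} {f : (ι → ℝ) →ₗ[ℝ] F}
    (h : IsLinearSubspace (f '' partialOrthant I)) :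
    ∃ x₀ : ι → ℝ, f x₀ = 0 ∧ ∀ i ∈ I, 0 < x₀ i := by
  obtain ⟨W, hW⟩ := h
  have hone : f 1 ∈ (W : Set F) := hW ▸ mem_image_of_mem f fun _ _ => zero_le_one
  obtain ⟨y, hy, hfy⟩ : -f 1 ∈ f '' partialOrthant I := hW ▸ W.neg_mem hone
  refine ⟨1 + y, by simp [hfy], fun i hi => ?_⟩
  simpa using add_pos_of_pos_of_nonneg one_pos (hy i hi)

theorem isLinearSubspace_image_partialOrthant_iff [Finite ι] (I : Set ι)
    (f : (ι → ℝ) →ₗ[ℝ] F) :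
    IsLinearSubspace (f '' partialOrthant I) ↔ ∃ x₀ : ι → ℝ, f x₀ = 0 ∧ ∀ i ∈ I, 0 < x₀ i :=
  ⟨exists_slater_of_isLinearSubspace_image, fun ⟨_, hker, hpos⟩ =>
    ⟨LinearMap.range f, by rw [image_partialOrthant_eq_range hker hpos, LinearMap.coe_range]⟩⟩

/-- `{Ax : x_I ≥ 0}` is a linear subspace iff the Slater condition
`∃ x, Ax = 0, x_I > 0` holds. -/
theorem stmt18 {m n : ℕ} (A : Matrix (Fin m) (Fin n) ℝ) (I : Set (Fin n)) :
    IsLinearSubspace {w : Fin m → ℝ | ∃ x : Fin n → ℝ, (∀ i ∈ I, 0 ≤ x i) ∧ w = A *ᵥ x} ↔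
      ∃ x : Fin n → ℝ, A *ᵥ x = 0 ∧ ∀ i ∈ I, 0 < x i := by
  have hset : {w : Fin m → ℝ | ∃ x : Fin n → ℝ, (∀ i ∈ I, 0 ≤ x i) ∧ w = A *ᵥ x} =
      A.mulVecLin '' partialOrthant I := by
    ext w
    simp [partialOrthant, eq_comm]
  rw [hset]
  exact isLinearSubspace_image_partialOrthant_iff I A.mulVecLin
end

section
/- Let A ∈ ℝ^{m×n} and I ⊆ {1,…,n}. The set {Aᵀy + s : y ∈ ℝ^m, s ∈ ℝ^n, s_i ≥ 0 for all i ∈ I} is a linear subspace of ℝ^n if and only if the Slater condition holds: there exists y ∈ ℝ^m with (Aᵀy)_i < 0 for all i ∈ I. -/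
open Matrix Set

/-! The set `B(ℝ^κ) + K_I`, with `K_I` the cone of vectors nonnegative on `I`, is a subspace
exactly when it is everything. If it is a subspace, it contains `-𝟙_I` (the negative of a vector
of `K_I`), and writing `-𝟙_I = B y + s` gives `(B y)_i = -1 - s_i < 0` on `I`. Conversely, a Slater
point `y` lets a large multiple `t • B y` fall below any given `w` on the finite set `I`. -/

section SlaterCondition

variable {ι κ : Type*} [Fintype κ]

def mulVecRangeAddNonnegOn (B : Matrix ι κ ℝ) (I : Set ι) : Set (ι → ℝ) :=
  {w | ∃ (y : κ → ℝ) (s : ι → ℝ), (∀ i ∈ I, 0 ≤ s i) ∧ w = B *ᵥ y + s}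

theorem indicator_one_mem_mulVecRangeAddNonnegOn (B : Matrix ι κ ℝ) (I : Set ι) :
    I.indicator 1 ∈ mulVecRangeAddNonnegOn B I :=
  ⟨0, I.indicator 1, fun i _ => Set.indicator_nonneg (fun _ _ => zero_le_one) i, by simp⟩

theorem exists_mulVec_neg_of_isLinearSubspace {B : Matrix ι κ ℝ} {I : Set ι}
    (h : IsLinearSubspace (mulVecRangeAddNonnegOn B I)) : ∃ y, ∀ i ∈ I, (B *ᵥ y) i < 0 := by
  obtain ⟨W, hW⟩ := h
  have hneg : -I.indicator 1 ∈ mulVecRangeAddNonnegOn B I := by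
    have hone := indicator_one_mem_mulVecRangeAddNonnegOn B I
    rw [hW] at hone ⊢
    exact W.neg_mem hone
  obtain ⟨y, s, hs, hys⟩ := hneg
  refine ⟨y, fun i hi => ?_⟩
  have hi' := congrFun hys i
  simp only [Pi.neg_apply, Set.indicator_of_mem hi, Pi.one_apply, Pi.add_apply] at hi'
  linarith [hs i hi]

theorem exists_mul_le_of_forall_neg [Finite ι] {I : Set ι} {u : ι → ℝ} (hu : ∀ i ∈ I, u i < 0)
    (w : ι → ℝ) : ∃ t : ℝ, ∀ i ∈ I, t * u i ≤ w i := by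
  obtain ⟨t, ht⟩ := Finite.exists_le fun i => w i / u i
  exact ⟨t, fun i hi => (div_le_iff_of_neg (hu i hi)).1 (ht i)⟩

theorem mulVecRangeAddNonnegOn_eq_univ [Finite ι] {B : Matrix ι κ ℝ} {I : Set ι} {y : κ → ℝ}
    (hy : ∀ i ∈ I, (B *ᵥ y) i < 0) : mulVecRangeAddNonnegOn B I = univ := by
  refine eq_univ_of_forall fun w => ?_
  obtain ⟨t, ht⟩ := exists_mul_le_of_forall_neg hy w
  refine ⟨t • y, w - B *ᵥ (t • y), fun i hi => ?_, by abel⟩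
  simpa [mulVec_smul] using ht i hi

end SlaterCondition

/-- `{Aᵀy + s : s_I ≥ 0}` is a linear subspace iff the Slater condition
`∃ y, (Aᵀy)_I < 0` holds. -/
theorem stmt19 {m n : ℕ} (A : Matrix (Fin m) (Fin n) ℝ) (I : Set (Fin n)) :
    IsLinearSubspace {w : Fin n → ℝ |
        ∃ (y : Fin m → ℝ) (s : Fin n → ℝ), (∀ i ∈ I, 0 ≤ s i) ∧ w = Aᵀ *ᵥ y + s} ↔
      ∃ y : Fin m → ℝ, ∀ i ∈ I, (Aᵀ *ᵥ y) i < 0 := by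
  refine ⟨exists_mulVec_neg_of_isLinearSubspace, fun ⟨y, hy⟩ => ⟨⊤, ?_⟩⟩
  exact (mulVecRangeAddNonnegOn_eq_univ hy).trans Submodule.top_coe.symm
end
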